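/- In a symplectic vector space, for a Euclidean decomposition {U, V} matching a polar decomposition, if B∩U and B∩V are 'polars' of each other in the sense that B∩U = {x ∈ U : |⟨x,y⟩| ≤ 1 for all y ∈ B∩V} and B∩V = {y ∈ V : |⟨x,y⟩| ≤ 1 for all x ∈ B∩U}, then the antinorm equals the norm: ||x||_a = ||x|| for all x. -/

import Mathlib

/-!
Write a unit vector as `x = cos ψ • u' + sin ψ • v'` and a competitor as
`y = cos φ • u + sin φ • v` with unit vectors `u, u' ∈ U`, `v, v' ∈ V`. As `U` and `V` are
isotropic, `ω y x = cos φ sin ψ ω(u, v') + sin φ cos ψ ω(v, u')`, and polarity bounds both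
pairings by `1` in absolute value, so `ω y x ≤ |cos φ sin ψ| + |sin φ cos ψ| ≤ 1`. Polarity and
compactness of the unit ball also give unit vectors `u ∈ U`, `v ∈ V` with
`ω(u, v') = ω(u', v) = 1`, and `φ = ψ - π / 2` then attains the bound. The antinorm is
positively homogeneous, so it agrees with the norm everywhere.
-/

/-- The antinorm: `‖x‖ₐ = sup {⟨y,x⟩ : ‖y‖ = 1}`. -/
noncomputable def antinorm {X : Type*} [NormedAddCommGroup X] [NormedSpace ℝ X]
    (ω : X →ₗ[ℝ] X →ₗ[ℝ] ℝ) (x : X) : ℝ :=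
  sSup {r : ℝ | ∃ y : X, ‖y‖ = 1 ∧ r = ω y x}

theorem LinearMap.apply_eq_zero_of_mem_span {R M N P : Type*} [CommSemiring R]
    [AddCommMonoid M] [AddCommMonoid N] [AddCommMonoid P] [Module R M] [Module R N] [Module R P]
    (B : M →ₗ[R] N →ₗ[R] P) {s : Set M} {t : Set N} (h : ∀ a ∈ s, ∀ b ∈ t, B a b = 0) :
    ∀ x ∈ Submodule.span R s, ∀ y ∈ Submodule.span R t, B x y = 0 := by
  intro x hx y hy
  induction hx, hy using Submodule.span_induction₂ with
  | mem_mem a b ha hb => exact h a ha b hb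
  | zero_left | zero_right => simp
  | add_left | add_right => simp_all
  | smul_left | smul_right => simp_all

theorem mul_mul_add_mul_mul_le_one {a b c d p q : ℝ} (h₁ : a ^ 2 + b ^ 2 = 1)
    (h₂ : c ^ 2 + d ^ 2 = 1) (hp : |p| ≤ 1) (hq : |q| ≤ 1) : a * d * p + b * c * q ≤ 1 := by
  have hle {r s : ℝ} (hs : |s| ≤ 1) : r * s ≤ |r| := by
    calc r * s ≤ |r * s| := le_abs_self _
      _ = |r| * |s| := abs_mul r s
      _ ≤ |r| := mul_le_of_le_one_right (abs_nonneg r) hs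
  calc a * d * p + b * c * q ≤ |a| * |d| + |b| * |c| := by
        rw [← abs_mul, ← abs_mul]; exact add_le_add (hle hp) (hle hq)
    _ ≤ 1 := by
        nlinarith [sq_nonneg (|a| - |d|), sq_nonneg (|b| - |c|), sq_abs a, sq_abs b, sq_abs c,
          sq_abs d]

section antinorm

open scoped Pointwise

variable {X : Type*} [NormedAddCommGroup X] [NormedSpace ℝ X] (ω : X →ₗ[ℝ] X →ₗ[ℝ] ℝ)

theorem antinorm_smul_of_nonneg {c : ℝ} (hc : 0 ≤ c) (x : X) :
    antinorm ω (c • x) = c * antinorm ω x := by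
  have hset : {r : ℝ | ∃ y : X, ‖y‖ = 1 ∧ r = ω y (c • x)} =
      c • {r : ℝ | ∃ y : X, ‖y‖ = 1 ∧ r = ω y x} := by
    ext r
    simp only [Set.mem_smul_set, Set.mem_ofPred_eq, map_smul, smul_eq_mul]
    constructor
    · rintro ⟨y, hy, rfl⟩; exact ⟨_, ⟨y, hy, rfl⟩, rfl⟩
    · rintro ⟨_, ⟨y, hy, rfl⟩, rfl⟩; exact ⟨y, hy, rfl⟩
  rw [antinorm, hset, Real.sSup_smul_of_nonneg hc, smul_eq_mul, antinorm]

theorem antinorm_eq_norm_of_forall_norm_eq_one (h : ∀ x : X, ‖x‖ = 1 → antinorm ω x = 1)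
    (x : X) : antinorm ω x = ‖x‖ := by
  rcases eq_or_ne x 0 with rfl | hx
  · simpa using antinorm_smul_of_nonneg ω le_rfl (0 : X)
  · have hunit : ‖‖x‖⁻¹ • x‖ = 1 := by
      rw [norm_smul, norm_inv, norm_norm, inv_mul_cancel₀ (norm_ne_zero_iff.2 hx)]
    simpa [smul_inv_smul₀ (norm_ne_zero_iff.2 hx), h _ hunit] using
      antinorm_smul_of_nonneg ω (norm_nonneg x) (‖x‖⁻¹ • x)

end antinorm

section polar

variable {X : Type*} [NormedAddCommGroup X] [NormedSpace ℝ X] [FiniteDimensional ℝ X]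

theorem Submodule.exists_forall_abs_le_apply (P : Submodule ℝ X) (ℓ : X →ₗ[ℝ] ℝ) :
    ∃ u ∈ P, ‖u‖ ≤ 1 ∧ ∀ x ∈ P, ‖x‖ ≤ 1 → |ℓ x| ≤ ℓ u := by
  have hK : IsCompact ((P : Set X) ∩ Metric.closedBall 0 1) :=
    (isCompact_closedBall (0 : X) 1).inter_left P.closed_of_finiteDimensional
  obtain ⟨u, ⟨huP, hu1⟩, hmax⟩ := hK.exists_isMaxOn ⟨0, P.zero_mem, by simp⟩
    ℓ.continuous_of_finiteDimensional.continuousOn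
  refine ⟨u, huP, by simpa using hu1, fun x hxP hx1 => abs_le.2 ⟨?_, ?_⟩⟩
  · have : ℓ (-x) ≤ ℓ u := hmax ⟨P.neg_mem hxP, by simpa using hx1⟩
    rw [map_neg] at this
    linarith
  · exact hmax ⟨hxP, by simpa using hx1⟩

theorem Submodule.exists_norm_eq_one_apply_eq_one (P : Submodule ℝ X) (ℓ : X →ₗ[ℝ] ℝ)
    (hle : ∀ x ∈ P, ‖x‖ ≤ 1 → |ℓ x| ≤ 1)
    (hge : ∀ t : ℝ, 0 < t → (∀ x ∈ P, ‖x‖ ≤ 1 → t * |ℓ x| ≤ 1) → t ≤ 1) :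
    ∃ u ∈ P, ‖u‖ = 1 ∧ ℓ u = 1 := by
  obtain ⟨u, huP, hu1, hmax⟩ := P.exists_forall_abs_le_apply ℓ
  have hM0 : 0 ≤ ℓ u := by simpa using hmax 0 P.zero_mem (by simp)
  have hM1 : ℓ u ≤ 1 := (le_abs_self _).trans (hle u huP hu1)
  -- testing the polar condition at `t = 2 / (1 + ℓ u)` forces `ℓ u ≥ 1`
  have hMeq : ℓ u = 1 := by
    refine le_antisymm hM1 ?_
    have := hge (2 / (1 + ℓ u)) (by positivity) fun x hxP hx1 => by
      calc 2 / (1 + ℓ u) * |ℓ x| ≤ 2 / (1 + ℓ u) * ℓ u := by gcongr; exact hmax x hxP hx1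
        _ ≤ 1 := by rw [div_mul_eq_mul_div, div_le_one (by positivity)]; linarith
    rw [div_le_one (by positivity)] at this; linarith
  have hu0 : u ≠ 0 := by rintro rfl; simp at hMeq
  have hnorm : 1 ≤ ‖u‖ := by
    have := hle _ (P.smul_mem ‖u‖⁻¹ huP)
      (by rw [norm_smul, norm_inv, norm_norm, inv_mul_cancel₀ (norm_ne_zero_iff.2 hu0)])
    rw [map_smul, smul_eq_mul, hMeq, mul_one, abs_inv, abs_norm] at this
    exact (inv_le_one₀ (norm_pos_iff.2 hu0)).1 this
  exact ⟨u, huP, le_antisymm hu1 hnorm, hMeq⟩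

theorem exists_norm_eq_one_apply_eq_one_of_polar (β : X →ₗ[ℝ] X →ₗ[ℝ] ℝ) {P Q : Submodule ℝ X}
    (hpol : {y : X | y ∈ Q ∧ ‖y‖ ≤ 1} =
      {y : X | y ∈ Q ∧ ∀ x : X, x ∈ P → ‖x‖ ≤ 1 → |β x y| ≤ 1})
    {w : X} (hwQ : w ∈ Q) (hw : ‖w‖ = 1) : ∃ u ∈ P, ‖u‖ = 1 ∧ β u w = 1 := by
  refine P.exists_norm_eq_one_apply_eq_one (β.flip w) (hpol.subset ⟨hwQ, hw.le⟩).2 ?_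
  intro t ht hbound
  have htw : t • w ∈ {y : X | y ∈ Q ∧ ‖y‖ ≤ 1} := hpol ▸ ⟨Q.smul_mem t hwQ, fun x hxP hx1 => by
    simpa [abs_mul, abs_of_pos ht] using hbound x hxP hx1⟩
  simpa [norm_smul, hw, abs_of_pos ht] using htw.2

end polar

section symplectic

variable {X : Type*} [NormedAddCommGroup X] [NormedSpace ℝ X] {ω : X →ₗ[ℝ] X →ₗ[ℝ] ℝ}
  {U V : Submodule ℝ X}

theorem apply_smul_add_smul_of_isotropic (hU : ∀ a ∈ U, ∀ b ∈ U, ω a b = 0)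
    (hV : ∀ a ∈ V, ∀ b ∈ V, ω a b = 0) {u u' v v' : X} (hu : u ∈ U) (hu' : u' ∈ U)
    (hv : v ∈ V) (hv' : v' ∈ V) (α β γ δ : ℝ) :
    ω (α • u + β • v) (γ • u' + δ • v') = α * δ * ω u v' + β * γ * ω v u' := by
  simp only [map_add, map_smul, LinearMap.add_apply, LinearMap.smul_apply, smul_eq_mul,
    hU u hu u' hu', hV v hv v' hv']
  ring

theorem antinorm_eq_one_of_norm_eq_one (hskew : ∀ x y : X, ω x y = - ω y x)
    (hU : ∀ a ∈ U, ∀ b ∈ U, ω a b = 0) (hV : ∀ a ∈ V, ∀ b ∈ V, ω a b = 0)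
    (hdecomp : {x : X | ‖x‖ = 1} =
      {x : X | ∃ u ∈ U, ∃ v ∈ V, ∃ φ : ℝ, ‖u‖ = 1 ∧ ‖v‖ = 1 ∧
        x = Real.cos φ • u + Real.sin φ • v})
    (hle : ∀ u ∈ U, ‖u‖ ≤ 1 → ∀ v ∈ V, ‖v‖ ≤ 1 → |ω u v| ≤ 1)
    (hattU : ∀ v ∈ V, ‖v‖ = 1 → ∃ u ∈ U, ‖u‖ = 1 ∧ ω u v = 1)
    (hattV : ∀ u ∈ U, ‖u‖ = 1 → ∃ v ∈ V, ‖v‖ = 1 ∧ ω u v = 1)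
    {x : X} (hx : ‖x‖ = 1) : antinorm ω x = 1 := by
  obtain ⟨u', hu'U, v', hv'V, ψ, hu'1, hv'1, rfl⟩ := hdecomp.subset hx
  refine IsGreatest.csSup_eq ⟨?_, ?_⟩
  · obtain ⟨u, huU, hu1, huv'⟩ := hattU v' hv'V hv'1
    obtain ⟨v, hvV, hv1, hu'v⟩ := hattV u' hu'U hu'1
    have hy : Real.sin ψ • u + (-Real.cos ψ) • v ∈ {x : X | ‖x‖ = 1} := hdecomp.superset
      ⟨u, huU, v, hvV, ψ - Real.pi / 2, hu1, hv1, by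
        rw [Real.cos_sub_pi_div_two, Real.sin_sub_pi_div_two]⟩
    refine ⟨_, hy, ?_⟩
    rw [apply_smul_add_smul_of_isotropic hU hV huU hu'U hvV hv'V, huv', hskew v u', hu'v]
    nlinarith [Real.sin_sq_add_cos_sq ψ]
  · rintro r ⟨y, hy, rfl⟩
    obtain ⟨u, huU, v, hvV, φ, hu1, hv1, rfl⟩ := hdecomp.subset hy
    rw [apply_smul_add_smul_of_isotropic hU hV huU hu'U hvV hv'V]
    refine mul_mul_add_mul_mul_le_one (Real.cos_sq_add_sin_sq φ) (Real.cos_sq_add_sin_sq ψ)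
      (hle u huU hu1.le v' hv'V hv'1.le) ?_
    rw [hskew, abs_neg]
    exact hle u' hu'U hu'1.le v hvV hv1.le

end symplectic

theorem stmt14_general {X : Type*} [NormedAddCommGroup X] [NormedSpace ℝ X]
    (n : ℕ)
    (e : Module.Basis (Fin n ⊕ Fin n) ℝ X)
    (ω : X →ₗ[ℝ] X →ₗ[ℝ] ℝ)
    (hskew : ∀ x y : X, ω x y = - ω y x)
    (hUU : ∀ i j : Fin n, ω (e (Sum.inl i)) (e (Sum.inl j)) = 0)
    (hVV : ∀ i j : Fin n, ω (e (Sum.inr i)) (e (Sum.inr j)) = 0)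
    (U V : Submodule ℝ X)
    (hU : U = Submodule.span ℝ (Set.range fun i : Fin n => e (Sum.inl i)))
    (hV : V = Submodule.span ℝ (Set.range fun i : Fin n => e (Sum.inr i)))
    -- `{U, V}` is a Euclidean decomposition of the norm:
    (hdecomp : {x : X | ‖x‖ = 1} =
      {x : X | ∃ u ∈ U, ∃ v ∈ V, ∃ φ : ℝ, ‖u‖ = 1 ∧ ‖v‖ = 1 ∧
        x = Real.cos φ • u + Real.sin φ • v})
    -- `B ∩ U` and `B ∩ V` are polars of each other:
    (hpolU : {x : X | x ∈ U ∧ ‖x‖ ≤ 1} =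
      {x : X | x ∈ U ∧ ∀ y : X, y ∈ V → ‖y‖ ≤ 1 → |ω x y| ≤ 1})
    (hpolV : {y : X | y ∈ V ∧ ‖y‖ ≤ 1} =
      {y : X | y ∈ V ∧ ∀ x : X, x ∈ U → ‖x‖ ≤ 1 → |ω x y| ≤ 1}) :
    ∀ x : X, antinorm ω x = ‖x‖ := by
  have : FiniteDimensional ℝ X := .of_basis e
  have hUiso : ∀ a ∈ U, ∀ b ∈ U, ω a b = 0 := hU ▸ ω.apply_eq_zero_of_mem_span
    (Set.forall_mem_range.2 fun i => Set.forall_mem_range.2 (hUU i))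
  have hViso : ∀ a ∈ V, ∀ b ∈ V, ω a b = 0 := hV ▸ ω.apply_eq_zero_of_mem_span
    (Set.forall_mem_range.2 fun i => Set.forall_mem_range.2 (hVV i))
  exact antinorm_eq_norm_of_forall_norm_eq_one ω fun x hx =>
    antinorm_eq_one_of_norm_eq_one hskew hUiso hViso hdecomp
      (fun u hu hu1 => (hpolU.subset ⟨hu, hu1⟩).2)
      (fun v hv hv1 => exists_norm_eq_one_apply_eq_one_of_polar ω hpolV hv hv1)
      (fun u hu hu1 => exists_norm_eq_one_apply_eq_one_of_polar ω.flip hpolU hu hu1) hx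

/-- Let `{U, V}` be a Euclidean decomposition of the norm matching a
polar decomposition `e` of the symplectic form `ω`. If `B ∩ U` and `B ∩ V` are polars
of each other with respect to `ω`, then the antinorm equals the norm. -/
theorem stmt14 {X : Type*} [NormedAddCommGroup X] [NormedSpace ℝ X]
    [FiniteDimensional ℝ X]
    (n : ℕ) (hn : 0 < n)
    (e : Module.Basis (Fin n ⊕ Fin n) ℝ X)
    (ω : X →ₗ[ℝ] X →ₗ[ℝ] ℝ)
    (hskew : ∀ x y : X, ω x y = - ω y x)
    (hUU : ∀ i j : Fin n, ω (e (Sum.inl i)) (e (Sum.inl j)) = 0)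
    (hVV : ∀ i j : Fin n, ω (e (Sum.inr i)) (e (Sum.inr j)) = 0)
    (hUV : ∀ i j : Fin n, ω (e (Sum.inl i)) (e (Sum.inr j)) = if i = j then 1 else 0)
    (U V : Submodule ℝ X)
    (hU : U = Submodule.span ℝ (Set.range fun i : Fin n => e (Sum.inl i)))
    (hV : V = Submodule.span ℝ (Set.range fun i : Fin n => e (Sum.inr i)))
    -- `{U, V}` is a Euclidean decomposition of the norm:
    (hdecomp : {x : X | ‖x‖ = 1} =
      {x : X | ∃ u ∈ U, ∃ v ∈ V, ∃ φ : ℝ, ‖u‖ = 1 ∧ ‖v‖ = 1 ∧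
        x = Real.cos φ • u + Real.sin φ • v})
    -- `B ∩ U` and `B ∩ V` are polars of each other:
    (hpolU : {x : X | x ∈ U ∧ ‖x‖ ≤ 1} =
      {x : X | x ∈ U ∧ ∀ y : X, y ∈ V → ‖y‖ ≤ 1 → |ω x y| ≤ 1})
    (hpolV : {y : X | y ∈ V ∧ ‖y‖ ≤ 1} =
      {y : X | y ∈ V ∧ ∀ x : X, x ∈ U → ‖x‖ ≤ 1 → |ω x y| ≤ 1}) :
    ∀ x : X, antinorm ω x = ‖x‖ :=
  stmt14_general n e ω hskew hUU hVV U V hU hV hdecomp hpolU hpolV
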